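/- For the Sasakian space form D³(-1), the basic CR Carathéodory pseudodistance satisfies c'_{D³(-1)}((z₁,t₁),(z₂,t₂)) = c^D(z₁,z₂) for all points, where c^D is the Carathéodory distance of the unit disk; in particular c'_{D³(-1)} is independent of the t-coordinates. -/

import Mathlib

noncomputable section

/-- The Poincaré (Bergman) distance on the unit disc of `ℂ`:
`ρ(a,b) = 2 artanh |(a-b)/(1- āb)| = log((1+δ)/(1-δ))`. -/
def poincareDist (a b : ℂ) : ℝ :=
  Real.log ((1 + ‖(a - b) / (1 - (starRingEnd ℂ) a * b)‖) /
    (1 - ‖(a - b) / (1 - (starRingEnd ℂ) a * b)‖))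

/-- `∂f/∂t` on `D × ℝ ⊆ ℂ × ℝ`, i.e. `df(ξ)` for the Reeb field `ξ = ∂/∂t`. -/
def dtD (f : ℂ × ℝ → ℂ) (p : ℂ × ℝ) : ℂ := fderiv ℝ f p (0, 1)

/-- the Wirtinger derivative `∂f/∂z̄ = ½(∂_x + i ∂_y) f` in the disc direction -/
def wirtZbar (f : ℂ × ℝ → ℂ) (p : ℂ × ℝ) : ℂ :=
  (1 / 2 : ℂ) * (fderiv ℝ f p (1, 0) + Complex.I * fderiv ℝ f p (Complex.I, 0))

/-- the Wirtinger derivative `∂f/∂z = ½(∂_x - i ∂_y) f` in the disc direction -/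
def wirtZ (f : ℂ × ℝ → ℂ) (p : ℂ × ℝ) : ℂ :=
  (1 / 2 : ℂ) * (fderiv ℝ f p (1, 0) - Complex.I * fderiv ℝ f p (Complex.I, 0))

/-- `T̄f` for the antiholomorphic frame field `T̄ = ∂/∂z̄ - i z/(1-|z|²) ∂/∂t` of
`T_{0,1}D³(-1)` on the Sasakian space form `D³(-1) = (D × ℝ, H, J, θ)`. -/
def TbarD (f : ℂ × ℝ → ℂ) (p : ℂ × ℝ) : ℂ :=
  wirtZbar f p - Complex.I * (p.1 / ((1 - ‖p.1‖ ^ 2 : ℝ) : ℂ)) * dtD f p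

/-- a CR function on `D³(-1)` : (smooth and) `T̄f = 0` on `D × ℝ`. -/
def IsCRD (f : ℂ × ℝ → ℂ) : Prop :=
  ∀ p : ℂ × ℝ, ‖p.1‖ < 1 → DifferentiableAt ℝ f p ∧ TbarD f p = 0

/-- a basic CR function on `D³(-1)` : (smooth and) `T̄f = 0` and `ξf = ∂f/∂t = 0`. -/
def IsBasicCRD (f : ℂ × ℝ → ℂ) : Prop :=
  ∀ p : ℂ × ℝ, ‖p.1‖ < 1 →
    DifferentiableAt ℝ f p ∧ TbarD f p = 0 ∧ dtD f p = 0

/-- the basic CR Carathéodory pseudodistance `c'_{D³(-1)}` of the Sasakian space form -/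
def cBasicD (p q : ℂ × ℝ) : ℝ :=
  sSup {r : ℝ | ∃ f : ℂ × ℝ → ℂ, IsBasicCRD f ∧
    (∀ x : ℂ × ℝ, ‖x.1‖ < 1 → ‖f x‖ < 1) ∧
    r = poincareDist (f p) (f q)}

/-- the Carathéodory distance `c^D` of the unit disc -/
def caraD (a b : ℂ) : ℝ :=
  sSup {r : ℝ | ∃ F : ℂ → ℂ, DifferentiableOn ℂ F (Metric.ball 0 1) ∧
    (∀ w : ℂ, ‖w‖ < 1 → ‖F w‖ < 1) ∧
    r = poincareDist (F a) (F b)}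

/-! A basic CR function has vanishing Reeb derivative, so it is constant along the `t`-fibres,
and with `∂f/∂t = 0` the equation `T̄f = 0` becomes the Cauchy–Riemann equation `∂f/∂z̄ = 0` for
its slices. Hence the basic CR maps into the disc are exactly the holomorphic self-maps of the
disc composed with the projection `(z, t) ↦ z`, and the two suprema run over the same set. -/

open Complex Metric

theorem apply_mk_eq_of_fderiv_apply_inr_eq_zero {E F : Type*} [NormedAddCommGroup E]
    [NormedSpace ℝ E] [NormedAddCommGroup F] [NormedSpace ℝ F] {f : E × ℝ → F} {z : E}
    (hf : ∀ u, DifferentiableAt ℝ f (z, u)) (hξ : ∀ u, fderiv ℝ f (z, u) (0, 1) = 0)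
    (t s : ℝ) : f (z, t) = f (z, s) := by
  have hderiv (u : ℝ) : HasDerivAt (fun u : ℝ => f (z, u)) 0 u := by
    simpa [hξ u, Function.comp_def] using
      (hf u).hasFDerivAt.comp_hasDerivAt u ((hasDerivAt_const u z).prodMk (hasDerivAt_id u))
  exact is_const_of_deriv_eq_zero (fun u => (hderiv u).differentiableAt)
    (fun u => (hderiv u).deriv) t s

theorem wirtZbar_eq_zero_iff {f : ℂ × ℝ → ℂ} {p : ℂ × ℝ} :
    wirtZbar f p = 0 ↔ fderiv ℝ f p (I, 0) = I * fderiv ℝ f p (1, 0) := by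
  simp only [wirtZbar, mul_eq_zero, one_div, inv_eq_zero, OfNat.ofNat_ne_zero, false_or]
  set L := fderiv ℝ f p
  constructor <;> intro h
  · linear_combination -I * h + L (I, 0) * I_sq
  · linear_combination I * h + L (1, 0) * I_sq

theorem differentiableAt_slice_of_wirtZbar_eq_zero {f : ℂ × ℝ → ℂ} {z : ℂ} {t : ℝ}
    (hf : DifferentiableAt ℝ f (z, t)) (hCR : wirtZbar f (z, t) = 0) :
    DifferentiableAt ℂ (fun w => f (w, t)) z := by
  have hslice : HasFDerivAt (fun w => f (w, t))
      ((fderiv ℝ f (z, t)).comp (ContinuousLinearMap.inl ℝ ℂ ℝ)) z :=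
    hf.hasFDerivAt.comp z ((hasFDerivAt_id z).prodMk (hasFDerivAt_const t z))
  exact (hslice.complexOfReal_hasFDerivAt (wirtZbar_eq_zero_iff.1 hCR)).differentiableAt

namespace IsBasicCRD

variable {f : ℂ × ℝ → ℂ}

theorem wirtZbar_eq_zero (hf : IsBasicCRD f) {p : ℂ × ℝ} (hp : ‖p.1‖ < 1) :
    wirtZbar f p = 0 := by
  obtain ⟨-, hT, hξ⟩ := hf p hp
  simpa [TbarD, hξ] using hT

theorem apply_mk_eq (hf : IsBasicCRD f) {z : ℂ} (hz : ‖z‖ < 1) (t s : ℝ) :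
    f (z, t) = f (z, s) :=
  apply_mk_eq_of_fderiv_apply_inr_eq_zero (fun u => (hf (z, u) hz).1)
    (fun u => (hf (z, u) hz).2.2) t s

theorem differentiableOn_slice (hf : IsBasicCRD f) (t : ℝ) :
    DifferentiableOn ℂ (fun w => f (w, t)) (ball 0 1) := fun z hz =>
  have hz : ‖z‖ < 1 := mem_ball_zero_iff.1 hz
  (differentiableAt_slice_of_wirtZbar_eq_zero (hf (z, t) hz).1
    (hf.wirtZbar_eq_zero hz)).differentiableWithinAt

end IsBasicCRD

theorem isBasicCRD_comp_fst {F : ℂ → ℂ} (hF : DifferentiableOn ℂ F (ball 0 1)) :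
    IsBasicCRD (fun p => F p.1) := by
  intro p hp
  have hFp : HasFDerivAt (fun q : ℂ × ℝ => F q.1)
      (((fderiv ℂ F p.1).restrictScalars ℝ).comp (ContinuousLinearMap.fst ℝ ℂ ℝ)) p :=
    ((hF.differentiableAt (isOpen_ball.mem_nhds (mem_ball_zero_iff.2 hp))).hasFDerivAt
      |>.restrictScalars ℝ).comp p hasFDerivAt_fst
  have hξ : dtD (fun q : ℂ × ℝ => F q.1) p = 0 := by simp [dtD, hFp.fderiv]
  have hCR : wirtZbar (fun q : ℂ × ℝ => F q.1) p = 0 := by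
    rw [wirtZbar_eq_zero_iff, hFp.fderiv]
    simp
  exact ⟨hFp.differentiableAt, by simp [TbarD, hCR, hξ], hξ⟩

/-- For the Sasakian space form `D³(-1)`, the basic CR Carathéodory pseudodistance satisfies
`c'_{D³(-1)}((z₁,t₁),(z₂,t₂)) = c^D(z₁,z₂)`; in particular it is independent of the
`t`-coordinates. -/
theorem cBasicD_eq_caraD :
    ∀ z₁ z₂ : ℂ, ‖z₁‖ < 1 → ‖z₂‖ < 1 →
      ∀ t₁ t₂ : ℝ, cBasicD (z₁, t₁) (z₂, t₂) = caraD z₁ z₂ := by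
  intro z₁ z₂ _ h₂ t₁ t₂
  unfold cBasicD caraD
  congr 1
  ext r
  constructor
  · rintro ⟨f, hf, hbound, rfl⟩
    refine ⟨fun w => f (w, t₁), hf.differentiableOn_slice t₁, fun w hw => hbound (w, t₁) hw, ?_⟩
    simp [hf.apply_mk_eq h₂ t₂ t₁]
  · rintro ⟨F, hF, hbound, rfl⟩
    exact ⟨fun p => F p.1, isBasicCRD_comp_fst hF, fun x hx => hbound x.1 hx, rfl⟩
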